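/- For every natural number N ≥ 1, as an identity of power series in q (|q|<1): ∑_{n=1}^{N} (-q;q)_n q^n/((q;q)_n (1-q^n)) − 2 ∑_{n=1}^{N} [N choose n] q^{n(n+3)/2} (-q;q)_{n-1}/((q;q)_n (1-q^n)) = ∑_{n=1}^{N} q^n/(1-q^n). -/

import Mathlib

open Finset

/-- q-Pochhammer symbol (a;q)_n = ∏_{k=0}^{n-1} (1 - a q^k). -/
noncomputable def qP (a q : ℂ) (n : ℕ) : ℂ := ∏ k ∈ Finset.range n, (1 - a * q ^ k)

/-- Gaussian (q-)binomial coefficient [N choose n]_q. -/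
noncomputable def qBinom (q : ℂ) (N n : ℕ) : ℂ := qP q q N / (qP q q n * qP q q (N - n))

/- The difference of the first and last sums is `∑ₙ qⁿ/(1-qⁿ) ((-q;q)ₙ/(q;q)ₙ - 1)`. By the
`q`-Chu–Vandermonde sum, `(-q;q)ₙ/(q;q)ₙ = ∑ₖ [n k] q^(k(k+1)/2) (-1;q)ₖ/(q;q)ₖ`, whose `k = 0` term
is `1`. Exchanging the two summations leaves the inner sums `∑_{n=k}^N [n k] qⁿ/(1-qⁿ)`, which
collapse to `[N k] qᵏ/(1-qᵏ)` by induction on `N`, since `[N+1 k](1-q^(N+1-k)) = [N k](1-q^(N+1))`.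
Finally `(-1;q)ₖ = 2(-q;q)ₖ₋₁` produces the factor `2`. -/

theorem one_sub_ne_zero_of_norm_lt_one {R : Type*} [NormedRing R] [NormOneClass R] {z : R}
    (hz : ‖z‖ < 1) : 1 - z ≠ 0 := by
  rw [sub_ne_zero]
  rintro rfl
  simp at hz

theorem one_sub_pow_ne_zero {q : ℂ} (hq : ‖q‖ < 1) {k : ℕ} (hk : k ≠ 0) : 1 - q ^ k ≠ 0 :=
  one_sub_ne_zero_of_norm_lt_one <| by rw [norm_pow]; exact pow_lt_one₀ (norm_nonneg q) hq hk

theorem sum_Icc_Icc_comm {M : Type*} [AddCommMonoid M] (a N : ℕ) (f : ℕ → ℕ → M) :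
    ∑ n ∈ Icc a N, ∑ k ∈ Icc a n, f n k = ∑ k ∈ Icc a N, ∑ n ∈ Icc k N, f n k :=
  sum_comm' fun n k => by simp only [mem_Icc]; omega

theorem qP_zero (a q : ℂ) : qP a q 0 = 1 := prod_range_zero _

theorem qP_succ (a q : ℂ) (n : ℕ) : qP a q (n + 1) = qP a q n * (1 - a * q ^ n) :=
  prod_range_succ _ _

theorem qP_self_succ (q : ℂ) (n : ℕ) : qP q q (n + 1) = qP q q n * (1 - q ^ (n + 1)) := by
  rw [qP_succ, pow_succ']

theorem qP_neg_succ (q : ℂ) (n : ℕ) : qP (-q) q (n + 1) = qP (-q) q n * (1 + q ^ (n + 1)) := by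
  rw [qP_succ, pow_succ', neg_mul, sub_neg_eq_add]

theorem qP_neg_one_succ (q : ℂ) (n : ℕ) : qP (-1) q (n + 1) = 2 * qP (-q) q n := by
  simp only [qP, prod_range_succ', pow_succ']
  norm_num [mul_comm]

theorem qP_ne_zero {a q : ℂ} (ha : ‖a‖ < 1) (hq : ‖q‖ ≤ 1) (n : ℕ) : qP a q n ≠ 0 :=
  prod_ne_zero_iff.2 fun k _ => one_sub_ne_zero_of_norm_lt_one <| by
    rw [norm_mul, norm_pow]
    exact (mul_le_of_le_one_right (norm_nonneg a) (pow_le_one₀ (norm_nonneg q) hq)).trans_lt ha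

noncomputable def chuCoeff (q : ℂ) (k : ℕ) : ℂ := q ^ (k * (k + 1) / 2) * qP (-1) q k / qP q q k

theorem chuCoeff_zero (q : ℂ) : chuCoeff q 0 = 1 := by simp [chuCoeff, qP_zero]

section

variable {q : ℂ}

theorem qBinom_zero_right (hq : ‖q‖ < 1) (n : ℕ) : qBinom q n 0 = 1 := by
  rw [qBinom, qP_zero, one_mul, Nat.sub_zero, div_self (qP_ne_zero hq hq.le n)]

theorem qBinom_self (hq : ‖q‖ < 1) (n : ℕ) : qBinom q n n = 1 := by
  rw [qBinom, Nat.sub_self, qP_zero, mul_one, div_self (qP_ne_zero hq hq.le n)]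

theorem qBinom_succ_mul_one_sub (hq : ‖q‖ < 1) {k n : ℕ} (h : k ≤ n) :
    qBinom q (n + 1) k * (1 - q ^ (n + 1 - k)) = qBinom q n k * (1 - q ^ (n + 1)) := by
  obtain ⟨d, rfl⟩ := Nat.exists_eq_add_of_le h
  rw [qBinom, qBinom, show k + d + 1 - k = d + 1 by omega, Nat.add_sub_cancel_left,
    qP_self_succ, qP_self_succ q d]
  have := qP_ne_zero hq hq.le k
  have := qP_ne_zero hq hq.le d
  have := one_sub_pow_ne_zero hq d.succ_ne_zero
  field_simp

theorem one_sub_pow_mul_qBinom_succ_succ (hq : ‖q‖ < 1) {k n : ℕ} (h : k < n) :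
    (1 - q ^ (n + 1)) * qBinom q (n + 1) (k + 1) =
      (1 - q ^ (n + k + 2)) * qBinom q n (k + 1) +
        q ^ (n - k) * (1 - q ^ (k + 1)) * qBinom q n k := by
  obtain ⟨d, rfl⟩ := Nat.exists_eq_add_of_lt h
  rw [qBinom, qBinom, qBinom, show k + d + 1 + 1 - (k + 1) = d + 1 by omega,
    show k + d + 1 - (k + 1) = d by omega, show k + d + 1 - k = d + 1 by omega,
    qP_self_succ q (k + d + 1), qP_self_succ q k, qP_self_succ q d]
  have := qP_ne_zero hq hq.le k
  have := qP_ne_zero hq hq.le d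
  have := one_sub_pow_ne_zero hq k.succ_ne_zero
  have := one_sub_pow_ne_zero hq d.succ_ne_zero
  field_simp
  ring

theorem one_sub_pow_mul_chuCoeff_succ (hq : ‖q‖ < 1) (k : ℕ) :
    (1 - q ^ (k + 1)) * chuCoeff q (k + 1) = q ^ (k + 1) * (1 + q ^ k) * chuCoeff q k := by
  have hexp : (k + 1) * (k + 1 + 1) / 2 = k * (k + 1) / 2 + (k + 1) := by
    rw [show (k + 1) * (k + 1 + 1) = k * (k + 1) + 2 * (k + 1) by ring,
      Nat.add_mul_div_left _ _ two_pos]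
  rw [chuCoeff, chuCoeff, hexp, qP_self_succ, qP_succ]
  have := qP_ne_zero hq hq.le k
  have := one_sub_pow_ne_zero hq k.succ_ne_zero
  field_simp
  ring

theorem one_sub_pow_mul_qBinom_mul_chuCoeff_succ (hq : ‖q‖ < 1) {k n : ℕ} (h : k < n) :
    (1 - q ^ (n + 1)) * (qBinom q (n + 1) (k + 1) * chuCoeff q (k + 1)) =
      (1 - q ^ (n + 1 + (k + 1))) * (qBinom q n (k + 1) * chuCoeff q (k + 1)) +
        q ^ (n + 1) * (1 + q ^ k) * (qBinom q n k * chuCoeff q k) := by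
  have hpow : q ^ (n - k) * q ^ (k + 1) = q ^ (n + 1) := by
    rw [← pow_add, show n - k + (k + 1) = n + 1 by omega]
  linear_combination chuCoeff q (k + 1) * one_sub_pow_mul_qBinom_succ_succ hq h +
    q ^ (n - k) * qBinom q n k * one_sub_pow_mul_chuCoeff_succ hq k +
    qBinom q n k * chuCoeff q k * (1 + q ^ k) * hpow

theorem one_sub_pow_mul_sum_qBinom_mul_chuCoeff_succ (hq : ‖q‖ < 1) (n : ℕ) :
    (1 - q ^ (n + 1)) * ∑ k ∈ range (n + 1 + 1), qBinom q (n + 1) k * chuCoeff q k =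
      (1 + q ^ (n + 1)) * ∑ k ∈ range (n + 1), qBinom q n k * chuCoeff q k := by
  set t : ℕ → ℕ → ℂ := fun n k => qBinom q n k * chuCoeff q k with ht
  -- the top term is treated apart: `qBinom q n (n + 1)` is not `0`
  have htop : (1 - q ^ (n + 1)) * t (n + 1) (n + 1) = q ^ (n + 1) * (1 + q ^ n) * t n n := by
    simp only [ht, qBinom_self hq, one_mul, one_sub_pow_mul_chuCoeff_succ hq]
  calc (1 - q ^ (n + 1)) * ∑ k ∈ range (n + 1 + 1), t (n + 1) k
      = (1 - q ^ (n + 1)) * t (n + 1) 0 +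
          ∑ k ∈ range n, (1 - q ^ (n + 1)) * t (n + 1) (k + 1) +
          (1 - q ^ (n + 1)) * t (n + 1) (n + 1) := by
        rw [sum_range_succ, sum_range_succ', ← mul_sum]; ring
    _ = (∑ k ∈ range n, (1 - q ^ (n + 1 + (k + 1))) * t n (k + 1) +
          (1 - q ^ (n + 1 + 0)) * t n 0) +
        (∑ k ∈ range n, q ^ (n + 1) * (1 + q ^ k) * t n k +
          q ^ (n + 1) * (1 + q ^ n) * t n n) := by
        rw [htop, sum_congr rfl fun k hk =>
          one_sub_pow_mul_qBinom_mul_chuCoeff_succ hq (mem_range.1 hk), sum_add_distrib]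
        simp only [ht, qBinom_zero_right hq, add_zero]
        ring
    _ = ∑ k ∈ range (n + 1), (1 - q ^ (n + 1 + k)) * t n k +
          ∑ k ∈ range (n + 1), q ^ (n + 1) * (1 + q ^ k) * t n k := by
        rw [sum_range_succ' _ n, sum_range_succ _ n]
    _ = (1 + q ^ (n + 1)) * ∑ k ∈ range (n + 1), t n k := by
        rw [← sum_add_distrib, mul_sum]
        exact sum_congr rfl fun k _ => by ring

/-- The case `c = -1` of the `q`-Chu–Vandermonde sum
`∑ₖ [n k] q^(k(k+1)/2) ∏_{j<k} (q^j - c) / (q;q)ₖ = (qc;q)ₙ / (q;q)ₙ`. -/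
theorem sum_qBinom_mul_chuCoeff (hq : ‖q‖ < 1) (n : ℕ) :
    ∑ k ∈ range (n + 1), qBinom q n k * chuCoeff q k = qP (-q) q n / qP q q n := by
  induction n with
  | zero => simp [qBinom_self hq, chuCoeff_zero, qP_zero]
  | succ n ih =>
    have h1 := one_sub_pow_ne_zero hq n.add_one_ne_zero
    have h2 := qP_ne_zero hq hq.le n
    rw [eq_div_iff h2] at ih
    rw [qP_neg_succ, qP_self_succ, eq_div_iff (mul_ne_zero h2 h1)]
    linear_combination qP q q n * one_sub_pow_mul_sum_qBinom_mul_chuCoeff_succ hq n +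
      (1 + q ^ (n + 1)) * ih

theorem qP_neg_mul_pow_div_eq_add_sum (hq : ‖q‖ < 1) (n : ℕ) :
    qP (-q) q n * q ^ n / (qP q q n * (1 - q ^ n)) =
      q ^ n / (1 - q ^ n) +
        ∑ k ∈ Icc 1 n, chuCoeff q k * (qBinom q n k * (q ^ n / (1 - q ^ n))) := by
  rw [mul_div_mul_comm, ← sum_qBinom_mul_chuCoeff hq,
    sum_range_eq_add_Ico _ (by omega : 0 < n + 1), Ico_add_one_right_eq_Icc,
    qBinom_zero_right hq, chuCoeff_zero, mul_one, add_mul, one_mul, sum_mul]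
  exact congrArg _ (sum_congr rfl fun k _ => by ring)

theorem sum_Icc_qBinom_mul_geom (hq : ‖q‖ < 1) {k N : ℕ} (hk : k ≠ 0) (hkN : k ≤ N) :
    ∑ n ∈ Icc k N, qBinom q n k * (q ^ n / (1 - q ^ n)) = qBinom q N k * (q ^ k / (1 - q ^ k)) := by
  induction N, hkN using Nat.le_induction with
  | base => simp [qBinom_self hq]
  | succ N hkN ih =>
    rw [sum_Icc_succ_top (by omega), ih]
    have hpow : q ^ k * q ^ (N + 1 - k) = q ^ (N + 1) := by
      rw [← pow_add, Nat.add_sub_cancel' (by omega)]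
    have := one_sub_pow_ne_zero hq hk
    have := one_sub_pow_ne_zero hq N.add_one_ne_zero
    field_simp
    linear_combination -q ^ k * qBinom_succ_mul_one_sub hq hkN - qBinom q (N + 1) k * hpow

theorem chuCoeff_mul_geom (hq : ‖q‖ < 1) {k : ℕ} (hk : k ≠ 0) :
    chuCoeff q k * (q ^ k / (1 - q ^ k)) =
      2 * (q ^ (k * (k + 3) / 2) * qP (-q) q (k - 1) / (qP q q k * (1 - q ^ k))) := by
  obtain ⟨j, rfl⟩ := Nat.exists_eq_add_one_of_ne_zero hk
  have hexp : (j + 1) * (j + 1 + 3) / 2 = (j + 1) * (j + 1 + 1) / 2 + (j + 1) := by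
    rw [show (j + 1) * (j + 1 + 3) = (j + 1) * (j + 1 + 1) + 2 * (j + 1) by ring,
      Nat.add_mul_div_left _ _ two_pos]
  have := qP_ne_zero hq hq.le (j + 1)
  have := one_sub_pow_ne_zero hq j.add_one_ne_zero
  rw [chuCoeff, qP_neg_one_succ, Nat.add_sub_cancel, hexp, pow_add _ ((j + 1) * (j + 1 + 1) / 2)]
  field_simp

end

theorem stmt_14_general (N : ℕ) (q : ℂ) (hq : ‖q‖ < 1) :
    ∑ n ∈ Finset.Icc 1 N, qP (-q) q n * q ^ n / (qP q q n * (1 - q ^ n)) -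
        2 * ∑ n ∈ Finset.Icc 1 N,
          qBinom q N n * (q ^ (n * (n + 3) / 2) * qP (-q) q (n - 1) / (qP q q n * (1 - q ^ n))) =
      ∑ n ∈ Finset.Icc 1 N, q ^ n / (1 - q ^ n) := by
  have hinner : ∀ k ∈ Icc 1 N,
      ∑ n ∈ Icc k N, chuCoeff q k * (qBinom q n k * (q ^ n / (1 - q ^ n))) =
        2 * (qBinom q N k *
          (q ^ (k * (k + 3) / 2) * qP (-q) q (k - 1) / (qP q q k * (1 - q ^ k)))) := by
    intro k hk
    obtain ⟨hk1, hkN⟩ := mem_Icc.1 hk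
    have hk0 : k ≠ 0 := by omega
    rw [← mul_sum, sum_Icc_qBinom_mul_geom hq hk0 hkN, mul_left_comm, chuCoeff_mul_geom hq hk0,
      mul_left_comm]
  rw [sum_congr rfl fun n _ => qP_neg_mul_pow_div_eq_add_sum hq n, sum_add_distrib,
    sum_Icc_Icc_comm, sum_congr rfl hinner, ← mul_sum]
  ring

theorem stmt_14 (N : ℕ) (hN : 1 ≤ N) (q : ℂ) (hq : ‖q‖ < 1) :
    ∑ n ∈ Finset.Icc 1 N, qP (-q) q n * q ^ n / (qP q q n * (1 - q ^ n)) -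
        2 * ∑ n ∈ Finset.Icc 1 N,
          qBinom q N n * (q ^ (n * (n + 3) / 2) * qP (-q) q (n - 1) / (qP q q n * (1 - q ^ n))) =
      ∑ n ∈ Finset.Icc 1 N, q ^ n / (1 - q ^ n) :=
  stmt_14_general N q hq
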